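/- arXiv:2409.01333 — 6 statements merged into one kernel-verified Lean document; each statement's English description precedes it below -/
import Mathlib

section
/- Let n ≥ 3 be an integer and define a_i := 2^{n+1} + Σ_{j=1}^{i} (-1)^{n+2-j} 2^{j-1} for i = 0, …, n+1, and d := 3·2^{n+1} + (-1)^{n+1}. Then the only tuples (e_0, …, e_{n+1}) of nonnegative integers satisfying e_0 a_0 + e_1 a_1 + ⋯ + e_{n+1} a_{n+1} = d are the exponent vectors of the monomials x_i^2 x_{i+1} for i = 0, …, n (i.e., e_i = 2, e_{i+1} = 1, all other entries 0) and of the monomial x_{n+1}^3 x_0 (i.e., e_{n+1} = 3, e_0 = 1, all other entries 0). -/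
/-!
Put `N = n + 1`. Summing a geometric series gives `3 a_i = 3 * 2^N + (-1)^N (1 - (-2)^i)`, so with
`E = ∑ e_i` and `T = ∑ e_i (-2)^i` the equation `∑ e_i a_i = d` becomes
`T = (E - 3) (1 + 3 (-2)^N)`. Since `|T| ≤ E 2^N`, only `E = 3` and `E = 4` survive.
If `E = 3` then `T = 0`; comparing 2-adic valuations, the least index carrying an exponent carries
exactly 2, and the remaining exponent sits at the next index. If `E = 4` then `T` is odd, so
`e_0 ∈ {1, 3}`; for `e_0 = 1` the three other units contribute `3 (-2)^N`, which by the triangle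
inequality forces all of them to sit at the top index `N`, and `e_0 = 3` is ruled out by size.
-/

open Finset

theorem three_mul_sum_Icc_neg_one_pow_mul_two_pow {n k : ℕ} (hk : k ≤ n + 2) :
    3 * ∑ j ∈ Icc 1 k, (-1 : ℤ) ^ (n + 2 - j) * 2 ^ (j - 1) =
      (-1) ^ (n + 1) * (1 - (-2) ^ k) := by
  have hterm : ∀ i < k,
      (-1 : ℤ) ^ (n + 2 - (1 + i)) * 2 ^ (1 + i - 1) = (-1) ^ (n + 1) * (-2) ^ i := by
    intro i hi
    obtain ⟨r, hr⟩ : ∃ r, n + 1 = r + i := ⟨n + 1 - i, by omega⟩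
    have hsq : (-1 : ℤ) ^ i * (-1) ^ i = 1 := by rw [← mul_pow]; simp
    rw [show n + 2 - (1 + i) = r by omega, Nat.add_sub_cancel_left, hr, pow_add, neg_pow (2 : ℤ)]
    linear_combination (-(-1 : ℤ) ^ r * 2 ^ i) * hsq
  rw [← Ico_add_one_right_eq_Icc, sum_Ico_eq_sum_range, Nat.add_sub_cancel,
    sum_congr rfl fun i hi => hterm i (mem_range.mp hi), ← mul_sum]
  linear_combination (-(-1 : ℤ) ^ (n + 1)) * geom_sum_mul (-2 : ℤ) k

theorem abs_sum_mul_le {ι R : Type*} [CommRing R] [LinearOrder R] [IsStrictOrderedRing R]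
    {s : Finset ι} {w x : ι → R} {B : R} (hw : ∀ i ∈ s, 0 ≤ w i)
    (hx : ∀ i ∈ s, |x i| ≤ B) :
    |∑ i ∈ s, w i * x i| ≤ (∑ i ∈ s, w i) * B := by
  rw [sum_mul]
  refine (abs_sum_le_sum_abs _ _).trans (sum_le_sum fun i hi => ?_)
  rw [abs_mul, abs_of_nonneg (hw i hi)]
  exact mul_le_mul_of_nonneg_left (hx i hi) (hw i hi)

theorem eq_of_sum_mul_eq_sum_mul {ι R : Type*} [CommRing R] [LinearOrder R] [IsStrictOrderedRing R]
    {s : Finset ι} {w x : ι → R} {c : R} (hw : ∀ i ∈ s, 0 ≤ w i)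
    (hx : ∀ i ∈ s, |x i| ≤ |c|) (h : ∑ i ∈ s, w i * x i = (∑ i ∈ s, w i) * c) {i : ι}
    (hi : i ∈ s) (hwi : w i ≠ 0) :
    x i = c := by
  have hgap : ∀ j ∈ s, 0 ≤ w j * (c * c - c * x j) := fun j hj => by
    refine mul_nonneg (hw j hj) (sub_nonneg.mpr ?_)
    calc c * x j ≤ |c| * |x j| := by rw [← abs_mul]; exact le_abs_self _
      _ ≤ |c| * |c| := mul_le_mul_of_nonneg_left (hx j hj) (abs_nonneg c)
      _ = c * c := abs_mul_abs_self c
  have htotal : ∑ j ∈ s, w j * (c * c - c * x j) = 0 := by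
    simp only [mul_sub, sum_sub_distrib, ← sum_mul, mul_left_comm _ c, ← mul_sum]
    linear_combination (-c) * h
  have hxi : c * x i = c * c := by
    have := (sum_eq_zero_iff_of_nonneg hgap).mp htotal i hi
    rcases mul_eq_zero.mp this with h0 | h0
    · exact absurd h0 hwi
    · exact (sub_eq_zero.mp h0).symm
  rcases eq_or_ne c 0 with rfl | hc
  · simpa using hx i hi
  · exact mul_left_cancel₀ hc hxi

theorem sum_ite_ite_eq_add {α M : Type*} [Fintype α] [DecidableEq α] [AddCommMonoid M] {a b : α}
    (hab : a ≠ b) (x y : M) : ∑ j, (if j = a then x else if j = b then y else 0) = x + y := by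
  rw [Fintype.sum_eq_add a b hab fun j hj => by simp [hj.1, hj.2]]
  simp [hab.symm]

theorem sum_ite_mul {α R : Type*} [Fintype α] [DecidableEq α] [NonAssocSemiring R] {a b : α}
    (hab : a ≠ b) (x y : R) (f : α → R) :
    ∑ j, (if j = a then x else if j = b then y else 0) * f j = x * f a + y * f b := by
  rw [Fintype.sum_eq_add a b hab fun j hj => by simp [hj.1, hj.2]]
  simp [hab.symm]

theorem eq_ite_of_le_of_sum_le {α : Type*} [Fintype α] [DecidableEq α] {e : α → ℕ}
    {a b : α} {x y : ℕ} (hab : a ≠ b) (ha : x ≤ e a) (hb : y ≤ e b)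
    (hsum : ∑ j, e j ≤ x + y) :
    e = fun j => if j = a then x else if j = b then y else 0 := by
  have hpair : e a + e b ≤ ∑ j, e j := by
    simpa [sum_pair hab] using sum_le_sum_of_subset (subset_univ {a, b})
  funext j
  by_cases hja : j = a
  · subst hja; simp only [if_true]; omega
  by_cases hjb : j = b
  · subst hjb; simp only [hja, if_false, if_true]; omega
  have htriple : e a + e b + e j ≤ ∑ j, e j := by
    have := sum_le_sum_of_subset (f := e) (subset_univ {a, b, j})
    rw [sum_insert (by simp [hab, Ne.symm hja]), sum_pair (Ne.symm hjb)] at this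
    omega
  simp only [hja, hjb, if_false]
  omega

theorem two_dvd_of_pow_succ_dvd_mul_neg_two_pow {c : ℤ} {k : ℕ}
    (h : 2 ^ (k + 1) ∣ c * (-2) ^ k) : 2 ∣ c := by
  rw [neg_pow, pow_succ', ← mul_assoc] at h
  have := (mul_dvd_mul_iff_right (pow_ne_zero k two_ne_zero)).mp h
  exact ((isUnit_neg_one.pow k).dvd_mul_right).mp this

theorem pow_succ_dvd_sum_neg_two_pow_sub {m : ℕ} (e : Fin m → ℕ) {i₀ : Fin m}
    (hmin : ∀ j < i₀, e j = 0) :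
    (2 : ℤ) ^ ((i₀ : ℕ) + 1) ∣
      ∑ j, (e j : ℤ) * (-2) ^ (j : ℕ) - e i₀ * (-2) ^ (i₀ : ℕ) := by
  rw [← add_sum_erase _ _ (mem_univ i₀), add_sub_cancel_left]
  refine dvd_sum fun j hj => ?_
  rcases lt_or_gt_of_ne (ne_of_mem_erase hj) with hlt | hgt
  · simp [hmin j hlt]
  · refine Dvd.dvd.mul_left ?_ _
    rw [neg_pow]
    exact Dvd.dvd.mul_left (pow_dvd_pow 2 hgt) _

theorem abs_neg_two_pow_le {m : ℕ} (i : Fin (m + 1)) : |(-2 : ℤ) ^ (i : ℕ)| ≤ 2 ^ m := by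
  rw [abs_pow, abs_neg, abs_two]
  exact pow_le_pow_right₀ one_le_two (Nat.lt_succ_iff.mp i.isLt)

theorem abs_sum_mul_neg_two_pow_le {m : ℕ} (s : Finset (Fin (m + 1))) (e : Fin (m + 1) → ℕ) :
    |∑ j ∈ s, (e j : ℤ) * (-2) ^ (j : ℕ)| ≤ (∑ j ∈ s, e j : ℕ) * 2 ^ m := by
  rw [Nat.cast_sum]
  exact abs_sum_mul_le (fun j _ => Nat.cast_nonneg _) fun j _ => abs_neg_two_pow_le j

theorem sum_eq_three_or_four {m : ℕ} (hm : 2 ≤ m) {e : Fin (m + 1) → ℕ}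
    (h : ∑ i, (e i : ℤ) * (-2) ^ (i : ℕ) =
      ((∑ i, e i : ℕ) - 3 : ℤ) * (1 + 3 * (-2) ^ m)) :
    ∑ i, e i = 3 ∨ ∑ i, e i = 4 := by
  set E := ∑ i, e i
  have hP : (4 : ℤ) ≤ 2 ^ m := by
    calc (4 : ℤ) = 2 ^ 2 := by norm_num
      _ ≤ 2 ^ m := pow_le_pow_right₀ one_le_two hm
  have hX : 3 * 2 ^ m - 1 ≤ |1 + 3 * (-2 : ℤ) ^ m| := by
    have := abs_add_le (1 + 3 * (-2 : ℤ) ^ m) (-1)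
    rw [add_neg_cancel_comm, abs_mul, abs_pow, abs_neg, abs_two, abs_neg, abs_one] at this
    norm_num at this
    linarith
  have hT := abs_sum_mul_neg_two_pow_le univ e
  rw [h, abs_mul] at hT
  by_contra hE
  rcases (show E ≤ 2 ∨ 5 ≤ E by omega) with hE | hE
  · have hE' : (E : ℤ) ≤ 2 := by exact_mod_cast hE
    rw [abs_of_neg (by linarith)] at hT
    nlinarith
  · have hE' : (5 : ℤ) ≤ E := by exact_mod_cast hE
    rw [abs_of_pos (by linarith)] at hT
    nlinarith

def chainExponent {m : ℕ} (i : Fin m) : Fin (m + 1) → ℕ :=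
  fun j => if j = i.castSucc then 2 else if j = i.succ then 1 else 0

def closingExponent (m : ℕ) : Fin (m + 1) → ℕ :=
  fun j => if j = Fin.last m then 3 else if j = 0 then 1 else 0

theorem exists_eq_chainExponent {m : ℕ} {e : Fin (m + 1) → ℕ} (hE : ∑ i, e i = 3)
    (hT : ∑ i, (e i : ℤ) * (-2) ^ (i : ℕ) = 0) : ∃ i : Fin m, e = chainExponent i := by
  have hne : {i | e i ≠ 0}.Nonempty := by
    obtain ⟨i, -, hi⟩ := exists_ne_zero_of_sum_ne_zero (s := univ) (f := e) (by omega)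
    exact ⟨i, hi⟩
  have hwf : WellFounded ((· < ·) : Fin (m + 1) → Fin (m + 1) → Prop) := wellFounded_lt
  set i₀ := hwf.min _ hne
  have hi₀ : e i₀ ≠ 0 := hwf.min_mem _ hne
  have hmin : ∀ j < i₀, e j = 0 := fun j hj => by_contra fun h => hwf.not_lt_min _ h hj
  -- all terms of the sum but the one at `i₀` are divisible by `2 ^ (i₀ + 1)`
  have h2 : e i₀ = 2 := by
    have hdvd := pow_succ_dvd_sum_neg_two_pow_sub e hmin
    rw [hT, zero_sub, dvd_neg] at hdvd
    have heven : 2 ∣ e i₀ := by exact_mod_cast two_dvd_of_pow_succ_dvd_mul_neg_two_pow hdvd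
    have := single_le_sum (fun j _ => Nat.zero_le (e j)) (mem_univ i₀)
    omega
  obtain ⟨j₀, hj₀, hej₀⟩ : ∃ j₀ ∈ univ.erase i₀, e j₀ ≠ 0 := by
    refine exists_ne_zero_of_sum_ne_zero ?_
    have := add_sum_erase univ e (mem_univ i₀)
    omega
  have hij : i₀ ≠ j₀ := (ne_of_mem_erase hj₀).symm
  have he := eq_ite_of_le_of_sum_le (e := e) hij h2.ge (Nat.one_le_iff_ne_zero.mpr hej₀) hE.le
  rw [he] at hT
  push_cast at hT
  rw [sum_ite_mul hij] at hT
  have hj : (j₀ : ℕ) = i₀ + 1 := by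
    refine Int.pow_right_injective (by norm_num : 1 < (-2 : ℤ).natAbs) ?_
    show (-2 : ℤ) ^ (j₀ : ℕ) = (-2) ^ ((i₀ : ℕ) + 1)
    linear_combination hT
  refine ⟨⟨i₀, by omega⟩, he.trans ?_⟩
  have hcast : (⟨i₀, by omega⟩ : Fin m).castSucc = i₀ := rfl
  have hsucc : (⟨i₀, by omega⟩ : Fin m).succ = j₀ := Fin.ext hj.symm
  unfold chainExponent
  rw [hcast, hsucc]

theorem eq_zero_of_sum_mul_neg_two_pow_eq {m : ℕ} {s : Finset (Fin (m + 1))}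
    {e : Fin (m + 1) → ℕ}
    (h : ∑ j ∈ s, (e j : ℤ) * (-2) ^ (j : ℕ) = (∑ j ∈ s, e j : ℕ) * (-2) ^ m) {j : Fin (m + 1)}
    (hj : j ∈ s) (hjl : j ≠ Fin.last m) : e j = 0 := by
  by_contra hej
  rw [Nat.cast_sum] at h
  have hq : |(-2 : ℤ) ^ m| = 2 ^ m := by simp [abs_pow]
  have := eq_of_sum_mul_eq_sum_mul (fun j _ => Nat.cast_nonneg (e j))
    (fun j _ => hq ▸ abs_neg_two_pow_le j) h hj (Nat.cast_ne_zero.mpr hej)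
  exact hjl (Fin.ext (Int.pow_right_injective (by norm_num) this))

theorem eq_closingExponent {m : ℕ} (hm : 1 ≤ m) {e : Fin (m + 1) → ℕ} (hE : ∑ i, e i = 4)
    (hT : ∑ i, (e i : ℤ) * (-2) ^ (i : ℕ) = 1 + 3 * (-2) ^ m) : e = closingExponent m := by
  set q : ℤ := (-2) ^ m
  have hq_even : 2 ∣ q := dvd_pow (by norm_num) (by omega)
  have hlast : Fin.last m ≠ 0 := Fin.ext_iff.not.mpr (by simp; omega)
  have hsplit := add_sum_erase univ (fun j => (e j : ℤ) * (-2) ^ (j : ℕ)) (mem_univ 0)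
  simp only [Fin.val_zero, pow_zero, mul_one, hT] at hsplit
  have hcount := add_sum_erase univ e (mem_univ 0)
  have hR := abs_sum_mul_neg_two_pow_le (univ.erase 0) e
  have h0 : e 0 = 1 ∨ e 0 = 3 := by
    have hpar := pow_succ_dvd_sum_neg_two_pow_sub e (i₀ := 0) fun j hj =>
      absurd hj (Fin.not_lt_zero j)
    simp only [Fin.val_zero, pow_zero, mul_one, zero_add, pow_one, hT] at hpar
    omega
  rcases h0 with h0 | h0
  · have hrest : ∑ j ∈ univ.erase 0, e j = 3 := by omega
    have hR3 : ∑ j ∈ univ.erase 0, (e j : ℤ) * (-2) ^ (j : ℕ) =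
        (∑ j ∈ univ.erase 0, e j : ℕ) * (-2) ^ m := by
      rw [hrest]
      rw [h0] at hsplit
      push_cast at hsplit
      linear_combination hsplit
    have hsupp : ∀ j, j ≠ 0 → j ≠ Fin.last m → e j = 0 := fun j hj0 hjl =>
      eq_zero_of_sum_mul_neg_two_pow_eq hR3 (mem_erase.mpr ⟨hj0, mem_univ j⟩) hjl
    have hl : e (Fin.last m) = 3 := by
      rw [Fintype.sum_eq_add 0 _ hlast.symm fun j hj => hsupp j hj.1 hj.2] at hE
      omega
    exact eq_ite_of_le_of_sum_le hlast hl.ge h0.ge hE.le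
  · -- a single remaining term `(-2) ^ j` would have to equal `3 * q - 2`, which is too large
    have hrest : ∑ j ∈ univ.erase 0, e j = 1 := by omega
    rw [h0] at hsplit
    rw [hrest, show ∑ j ∈ univ.erase 0, (e j : ℤ) * (-2) ^ (j : ℕ) = 3 * q - 2 by
      push_cast at hsplit; linarith] at hR
    have := abs_sub_abs_le_abs_sub (3 * q) 2
    have hq : |q| = 2 ^ m := by simp [q, abs_pow]
    rw [abs_mul, hq] at this
    have hP : (2 : ℤ) ≤ 2 ^ m := le_self_pow₀ one_le_two (by omega)
    norm_num at hR this
    linarith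

theorem sum_mul_eq_degree_iff_sum_mul_neg_two_pow_eq {m : ℕ} {a : Fin (m + 1) → ℤ}
    (ha : ∀ i, 3 * a i = 3 * 2 ^ m + (-1) ^ m * (1 - (-2) ^ (i : ℕ)))
    (e : Fin (m + 1) → ℕ) :
    ∑ i, (e i : ℤ) * a i = 3 * 2 ^ m + (-1) ^ m ↔
      ∑ i, (e i : ℤ) * (-2) ^ (i : ℕ) =
        ((∑ i, e i : ℕ) - 3 : ℤ) * (1 + 3 * (-2) ^ m) := by
  set s : ℤ := (-1) ^ m
  set T := ∑ i, (e i : ℤ) * (-2) ^ (i : ℕ)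
  have hs : s * s = 1 := by rw [← mul_pow]; simp
  have hq : (-2 : ℤ) ^ m = s * 2 ^ m := neg_pow 2 m
  have h3 : 3 * ∑ i, (e i : ℤ) * a i = (3 * 2 ^ m + s) * (∑ i, e i : ℕ) - s * T := by
    have hterm : ∀ i, 3 * ((e i : ℤ) * a i) =
        (3 * 2 ^ m + s) * e i - s * ((e i : ℤ) * (-2) ^ (i : ℕ)) :=
      fun i => by linear_combination (e i : ℤ) * ha i
    rw [mul_sum, sum_congr rfl fun i _ => hterm i, sum_sub_distrib, ← mul_sum, ← mul_sum,
      Nat.cast_sum]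
  rw [hq]
  constructor
  · intro h
    linear_combination s * h3 - 3 * s * h + ((∑ i, e i : ℕ) - T - 3) * hs
  · intro h
    refine mul_left_cancel₀ (three_ne_zero (α := ℤ)) ?_
    linear_combination h3 - s * h + (9 - 3 * (∑ i, e i : ℕ)) * 2 ^ m * hs

theorem sum_mul_neg_two_pow_eq_iff {m : ℕ} (hm : 2 ≤ m) (e : Fin (m + 1) → ℕ) :
    ∑ i, (e i : ℤ) * (-2) ^ (i : ℕ) = ((∑ i, e i : ℕ) - 3 : ℤ) * (1 + 3 * (-2) ^ m) ↔
      (∃ i : Fin m, e = chainExponent i) ∨ e = closingExponent m := by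
  constructor
  · intro h
    rcases sum_eq_three_or_four hm h with hE | hE <;> rw [hE] at h
    · exact Or.inl (exists_eq_chainExponent hE (by simpa using h))
    · exact Or.inr (eq_closingExponent (by omega) hE (by simpa using h))
  · rintro (⟨i, rfl⟩ | rfl)
    · have hne : i.castSucc ≠ i.succ := Fin.castSucc_lt_succ.ne
      have hE : ∑ j, chainExponent i j = 3 := sum_ite_ite_eq_add hne 2 1
      rw [hE]
      unfold chainExponent
      push_cast
      rw [sum_ite_mul hne]
      simp only [Fin.val_castSucc, Fin.val_succ]
      ring
    · have hne : Fin.last m ≠ 0 := Fin.ext_iff.not.mpr (by simp; omega)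
      have hE : ∑ j, closingExponent m j = 4 := sum_ite_ite_eq_add hne 3 1
      rw [hE]
      unfold closingExponent
      push_cast
      rw [sum_ite_mul hne]
      simp only [Fin.val_last, Fin.val_zero]
      ring

/-- For `n ≥ 3`, with weights
`a_i = 2^(n+1) + ∑_{j=1}^{i} (-1)^(n+2-j) 2^(j-1)` (for `i = 0, …, n+1`) and degree
`d = 3·2^(n+1) + (-1)^(n+1)`, the only tuples `(e_0, …, e_{n+1})` of nonnegative integers
with `∑ e_i a_i = d` are the exponent vectors of the monomials `x_i^2 x_{i+1}`
(`i = 0, …, n`) and of `x_{n+1}^3 x_0`. -/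
theorem loop_weights_only_monomials
    (n : ℕ) (hn : 3 ≤ n)
    (a : Fin (n + 2) → ℤ)
    (ha : ∀ i : Fin (n + 2),
      a i = 2 ^ (n + 1) + ∑ j ∈ Finset.Icc 1 (i : ℕ), (-1 : ℤ) ^ (n + 2 - j) * 2 ^ (j - 1))
    (d : ℤ) (hd : d = 3 * 2 ^ (n + 1) + (-1 : ℤ) ^ (n + 1))
    (e : Fin (n + 2) → ℕ) :
    (∑ i, (e i : ℤ) * a i = d) ↔
      ((∃ i : Fin (n + 1),
          e = fun j => if j = i.castSucc then 2 else if j = i.succ then 1 else 0) ∨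
        e = fun j => if j = Fin.last (n + 1) then 3 else if j = 0 then 1 else 0) := by
  have ha3 : ∀ i : Fin (n + 2),
      3 * a i = 3 * 2 ^ (n + 1) + (-1) ^ (n + 1) * (1 - (-2) ^ (i : ℕ)) :=
    fun i => by rw [ha i, mul_add, three_mul_sum_Icc_neg_one_pow_mul_two_pow (by omega)]
  rw [hd, sum_mul_eq_degree_iff_sum_mul_neg_two_pow_eq ha3]
  exact sum_mul_neg_two_pow_eq_iff (by omega) e
end

section
/- Let n ≥ 3 be an integer and define a_i := 2^{n+1} + Σ_{j=1}^{i} (-1)^{n+2-j} 2^{j-1} for i = 0, …, n+1. Then the set of weights {a_0, …, a_{n+1}} is well-formed: for every index i, the greatest common divisor of the n+1 integers {a_j : j ≠ i} equals 1. In particular gcd(a_0, …, a_{n+1}) = 1 and |a_1 − a_0| = 1. -/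
/-!
With `u = (-1)^n`, the weights begin `a₀ = 2·2ⁿ`, `a₁ = 2·2ⁿ - u`, `a₂ = 2·2ⁿ + u`, and these
three integers are pairwise coprime since `u² = 1`. Omitting any single weight leaves two of
them, so the gcd of the rest is `1`.
-/

theorem isCoprime_two_mul_sub_add {R : Type*} [CommRing R] (x u : R) (hu : u * u = 1) :
    IsCoprime (2 * x) (2 * x - u) ∧ IsCoprime (2 * x) (2 * x + u) ∧
      IsCoprime (2 * x - u) (2 * x + u) :=
  ⟨⟨u, -u, by linear_combination hu⟩, ⟨-u, u, by linear_combination hu⟩,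
    ⟨-(x + u), x, by linear_combination hu⟩⟩

namespace Finset

variable {ι α : Type*} [CommRing α] [NormalizedGCDMonoid α] {s : Finset ι} {f : ι → α}

theorem gcd_eq_one_of_isCoprime {p q : ι} (hp : p ∈ s) (hq : q ∈ s)
    (h : IsCoprime (f p) (f q)) : s.gcd f = 1 := by
  rw [← normalize_gcd]
  exact normalize_eq_one.mpr (h.isUnit_of_dvd' (gcd_dvd hp) (gcd_dvd hq))

theorem gcd_erase_eq_one_of_isCoprime [DecidableEq ι] {p q r : ι}
    (hpq : p ≠ q) (hpr : p ≠ r) (hqr : q ≠ r) (hp : p ∈ s) (hq : q ∈ s) (hr : r ∈ s)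
    (hfpq : IsCoprime (f p) (f q)) (hfpr : IsCoprime (f p) (f r))
    (hfqr : IsCoprime (f q) (f r)) (i : ι) : (s.erase i).gcd f = 1 := by
  by_cases hip : i = p
  · subst hip
    exact gcd_eq_one_of_isCoprime (mem_erase.2 ⟨hpq.symm, hq⟩) (mem_erase.2 ⟨hpr.symm, hr⟩) hfqr
  by_cases hiq : i = q
  · subst hiq
    exact gcd_eq_one_of_isCoprime (mem_erase.2 ⟨hpq, hp⟩) (mem_erase.2 ⟨hqr.symm, hr⟩) hfpr
  exact gcd_eq_one_of_isCoprime (mem_erase.2 ⟨Ne.symm hip, hp⟩) (mem_erase.2 ⟨Ne.symm hiq, hq⟩)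
    hfpq

end Finset

/-- For `n ≥ 3`, the weights `a_i = 2^(n+1) + ∑_{j=1}^{i} (-1)^(n+2-j) 2^(j-1)`
form a well-formed set: omitting any single weight, the gcd of the remaining ones is `1`.
In particular `gcd(a_0, …, a_{n+1}) = 1` and `|a_1 - a_0| = 1`. -/
theorem loop_weights_well_formed
    (n : ℕ) (hn : 3 ≤ n)
    (a : Fin (n + 2) → ℤ)
    (ha : ∀ i : Fin (n + 2),
      a i = 2 ^ (n + 1) + ∑ j ∈ Finset.Icc 1 (i : ℕ), (-1 : ℤ) ^ (n + 2 - j) * 2 ^ (j - 1)) :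
    (∀ i : Fin (n + 2), Finset.gcd (Finset.univ.erase i) a = 1) ∧
    Finset.gcd Finset.univ a = 1 ∧
    |a 1 - a 0| = 1 := by
  set u : ℤ := (-1) ^ n
  have hu : u * u = 1 := by simp [u, ← mul_pow]
  have h0 : a 0 = 2 * 2 ^ n := by simp [ha, pow_succ']
  have h1 : a 1 = 2 * 2 ^ n - u := by simp [ha, pow_succ', u, sub_eq_add_neg]
  have h2 : a ⟨2, by omega⟩ = 2 * 2 ^ n + u := by
    simp [ha, Finset.sum_Icc_succ_top, pow_succ', u, mul_two]
  obtain ⟨c01, c02, c12⟩ := isCoprime_two_mul_sub_add (2 ^ n : ℤ) u hu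
  have h01 : IsCoprime (a 0) (a 1) := h0 ▸ h1 ▸ c01
  have h02 : IsCoprime (a 0) (a ⟨2, _⟩) := h0 ▸ h2 ▸ c02
  have h12 : IsCoprime (a 1) (a ⟨2, _⟩) := h1 ▸ h2 ▸ c12
  refine ⟨fun i => ?_, Finset.gcd_eq_one_of_isCoprime (Finset.mem_univ 0) (Finset.mem_univ 1) h01,
    by simp [h0, h1, u]⟩
  exact Finset.gcd_erase_eq_one_of_isCoprime (by simp) (by simp [Fin.ext_iff])
    (by simp [Fin.ext_iff]) (Finset.mem_univ _) (Finset.mem_univ _) (Finset.mem_univ _)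
    h01 h02 h12 i
end

section
/- Let n ≥ 3 be an integer and define a_i := 2^{n+1} + Σ_{j=1}^{i} (-1)^{n+2-j} 2^{j-1} for i = 0, …, n+1, and d := 3·2^{n+1} + (-1)^{n+1}. Then for every i = 0, …, n one has d < 4a_i and 2a_i < d; that is, all the weights except the last one, a_{n+1}, lie strictly between d/4 and d/2. Moreover d > 2a_i for every i = 0, …, n+1, i.e., the degree is more than twice every weight. -/
/-!
Writing `ε = (-1)^(n+1)`, the summands are `ε (-2)^(j-1)`, so the geometric sum gives
`3 a_i = d - ε (-2)^i`. Both inequalities for `a_i` then reduce to `|c (-2)^i| < d` with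
`c = 2` or `c = 4`, and `|c (-2)^i| ≤ 2^(n+2) < 3·2^(n+1) - 1 ≤ d` as long as `c·2^i ≤ 2^(n+2)`.
-/

open Finset

lemma neg_one_pow_mul_two_pow (m k : ℕ) :
    (-1 : ℤ) ^ m * 2 ^ k = (-1) ^ (m + k) * (-2) ^ k := by
  rw [neg_pow (2 : ℤ) k, pow_add]
  ring_nf
  simp

lemma sum_Icc_one_comp_sub_one {M : Type*} [AddCommMonoid M] (f : ℕ → M) (i : ℕ) :
    ∑ j ∈ Icc 1 i, f (j - 1) = ∑ k ∈ range i, f k := by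
  induction i with
  | zero => simp
  | succ i ih => rw [sum_Icc_succ_top (by omega), sum_range_succ, ih, Nat.add_sub_cancel]

lemma three_mul_sum_neg_one_pow_mul_two_pow (n i : ℕ) (hi : i ≤ n + 2) :
    3 * ∑ j ∈ Icc 1 i, (-1 : ℤ) ^ (n + 2 - j) * 2 ^ (j - 1) = (-1) ^ (n + 1) * (1 - (-2) ^ i) := by
  have hterm : ∀ j ∈ Icc 1 i,
      (-1 : ℤ) ^ (n + 2 - j) * 2 ^ (j - 1) = (-1) ^ (n + 1) * (-2) ^ (j - 1) := by
    intro j hj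
    have hj := mem_Icc.mp hj
    rw [neg_one_pow_mul_two_pow, show n + 2 - j + (j - 1) = n + 1 by omega]
  rw [sum_congr rfl hterm, ← mul_sum, sum_Icc_one_comp_sub_one (fun k => (-2 : ℤ) ^ k)]
  linear_combination -(-1 : ℤ) ^ (n + 1) * geom_sum_mul (-2 : ℤ) i

theorem loop_weights_degree_bounds_general
    (n : ℕ)
    (a : Fin (n + 2) → ℤ)
    (ha : ∀ i : Fin (n + 2),
      a i = 2 ^ (n + 1) + ∑ j ∈ Finset.Icc 1 (i : ℕ), (-1 : ℤ) ^ (n + 2 - j) * 2 ^ (j - 1))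
    (d : ℤ) (hd : d = 3 * 2 ^ (n + 1) + (-1 : ℤ) ^ (n + 1)) :
    (∀ i : Fin (n + 1), d < 4 * a i.castSucc ∧ 2 * a i.castSucc < d) ∧
    (∀ i : Fin (n + 2), 2 * a i < d) := by
  have hsign : |(-1 : ℤ) ^ (n + 1)| = 1 := by simp
  have hd_gt : 2 ^ (n + 2) < d := by
    have hsign_ge := (abs_le.mp hsign.le).1
    have hpow_gt : (1 : ℤ) < 2 ^ (n + 1) := one_lt_pow₀ one_lt_two (Nat.succ_ne_zero n)
    rw [hd, pow_succ]
    linarith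
  have hweight : ∀ i : Fin (n + 2), ∃ e : ℤ, 3 * a i = d - e ∧ |e| = 2 ^ (i : ℕ) := by
    intro i
    refine ⟨(-1) ^ (n + 1) * (-2) ^ (i : ℕ), ?_, by simp [abs_mul]⟩
    rw [ha, hd, mul_add, three_mul_sum_neg_one_pow_mul_two_pow n i (by omega)]
    ring
  refine ⟨fun i => ?_, fun i => ?_⟩
  · obtain ⟨e, h3, he⟩ := hweight i.castSucc
    have hle : (2 : ℤ) ^ (i : ℕ) ≤ 2 ^ n := pow_le_pow_right₀ one_le_two (by omega)
    have he := abs_le.mp (he.trans_le hle)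
    rw [pow_succ, pow_succ] at hd_gt
    constructor <;> linarith
  · obtain ⟨e, h3, he⟩ := hweight i
    have hle : (2 : ℤ) ^ (i : ℕ) ≤ 2 ^ (n + 1) := pow_le_pow_right₀ one_le_two (by omega)
    have he := abs_le.mp (he.trans_le hle)
    rw [pow_succ _ (n + 1)] at hd_gt
    linarith

/-- For `n ≥ 3`, with weights `a_i = 2^(n+1) + ∑_{j=1}^{i} (-1)^(n+2-j) 2^(j-1)`
and degree `d = 3·2^(n+1) + (-1)^(n+1)`: for every `i = 0, …, n` one has `d < 4 a_i` and
`2 a_i < d` (the weights except the last lie strictly between `d/4` and `d/2`);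
moreover `d > 2 a_i` for every `i = 0, …, n+1`. -/
theorem loop_weights_degree_bounds
    (n : ℕ) (hn : 3 ≤ n)
    (a : Fin (n + 2) → ℤ)
    (ha : ∀ i : Fin (n + 2),
      a i = 2 ^ (n + 1) + ∑ j ∈ Finset.Icc 1 (i : ℕ), (-1 : ℤ) ^ (n + 2 - j) * 2 ^ (j - 1))
    (d : ℤ) (hd : d = 3 * 2 ^ (n + 1) + (-1 : ℤ) ^ (n + 1)) :
    (∀ i : Fin (n + 1), d < 4 * a i.castSucc ∧ 2 * a i.castSucc < d) ∧
    (∀ i : Fin (n + 2), 2 * a i < d) :=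
  loop_weights_degree_bounds_general n a ha d hd
end

section
/- Let n ≥ 1 be an integer and let c_0, …, c_{n+1} be complex numbers. Consider the polynomial F = Σ_{i=0}^{n} c_i x_i^2 x_{i+1} + c_{n+1} x_{n+1}^3 x_0 in the variables x_0, …, x_{n+1}. Then the partial derivatives ∂F/∂x_0, …, ∂F/∂x_{n+1} have a common zero in ℂ^{n+2} ∖ {0} if and only if some coefficient c_i equals 0. Equivalently, the origin is the only common zero of the partial derivatives if and only if all c_i are nonzero. -/
/-!
For the loop polynomial `F = ∑ cᵢ xᵢ^eᵢ x_{σ i}` put `mᵢ = cᵢ xᵢ^eᵢ x_{σ i}`. Euler's trick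
`x_{σ i} ∂_{σ i} F = e_{σ i} m_{σ i} + mᵢ` turns a common zero of the partial derivatives into the
relations `mᵢ = -e_{σ i} m_{σ i}`; as every `eⱼ ≥ 2`, summing `‖mᵢ‖ ≥ 2 ‖m_{σ i}‖` over `i` forces
all `mᵢ = 0`. If moreover no `cᵢ` vanishes and `xⱼ ≠ 0`, then `∂_{σ j} F = 0` forces `x_{σ j} ≠ 0`,
contradicting `mⱼ = 0`. Conversely, if `c_k = 0`, every partial derivative vanishes at the `k`-th
basis vector: each of its monomials either carries `c_k` or involves a variable other than `x_k`.
The polynomial of the theorem is the case of the cyclic rotation with exponents `2, …, 2, 3`.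
-/

open MvPolynomial

variable {ι R : Type*}

noncomputable def loopPolynomial [Fintype ι] [CommSemiring R] (σ : Equiv.Perm ι) (e : ι → ℕ)
    (c : ι → R) : MvPolynomial ι R :=
  ∑ i, C (c i) * X i ^ e i * X (σ i)

section CommSemiring

variable [Fintype ι] [CommSemiring R]

theorem pderiv_loopPolynomial (σ : Equiv.Perm ι) (e : ι → ℕ) (c : ι → R) (k : ι) :
    pderiv k (loopPolynomial σ e c) =
      C (c k * e k) * X k ^ (e k - 1) * X (σ k) +
        C (c (σ.symm k)) * X (σ.symm k) ^ e (σ.symm k) := by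
  classical
  simp [loopPolynomial, pderiv_X, Pi.single_apply, Derivation.leibniz_pow, Finset.sum_add_distrib,
    ← Equiv.eq_symm_apply]
  ring

theorem mul_eval_pderiv_loopPolynomial (σ : Equiv.Perm ι) {e : ι → ℕ} (c x : ι → R) {i : ι}
    (hi : e (σ i) ≠ 0) :
    x (σ i) * eval x (pderiv (σ i) (loopPolynomial σ e c)) =
      e (σ i) * (c (σ i) * x (σ i) ^ e (σ i) * x (σ (σ i))) + c i * x i ^ e i * x (σ i) := by
  simp only [pderiv_loopPolynomial, Equiv.symm_apply_apply, map_add, map_mul, eval_C, eval_X,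
    map_pow, map_natCast]
  rw [← pow_sub_one_mul hi]
  ring

theorem eval_pderiv_loopPolynomial_single_eq_zero [DecidableEq ι] (σ : Equiv.Perm ι) {e : ι → ℕ}
    (he : ∀ i, 2 ≤ e i) {c : ι → R} {k : ι} (hk : c k = 0) (i : ι) :
    eval (Pi.single k 1) (pderiv i (loopPolynomial σ e c)) = 0 := by
  have hsingle : ∀ j {p}, p ≠ 0 → c j * (Pi.single k 1 : ι → R) j ^ p = 0 := fun j p hp => by
    by_cases hj : j = k
    · simp [hj, hk]
    · simp [hj, hp]
  simp only [pderiv_loopPolynomial, map_add, map_mul, eval_C, eval_X, map_pow, map_natCast]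
  calc _ = c i * (Pi.single k 1 : ι → R) i ^ (e i - 1) * (e i * (Pi.single k 1 : ι → R) (σ i))
          + c (σ.symm i) * (Pi.single k 1 : ι → R) (σ.symm i) ^ e (σ.symm i) := by ring
    _ = 0 := by
      rw [hsingle i (by grind [he i]), hsingle (σ.symm i) (by grind [he (σ.symm i)]), zero_mul,
        add_zero]

end CommSemiring

theorem eq_zero_of_forall_natCast_mul_apply_add_eq_zero {𝕜 : Type*} [RCLike 𝕜] [Fintype ι]
    (σ : Equiv.Perm ι) {e : ι → ℕ} (he : ∀ i, 2 ≤ e i) {m : ι → 𝕜}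
    (h : ∀ i, e (σ i) * m (σ i) + m i = 0) : m = 0 := by
  have hnorm : ∀ i, 2 * ‖m (σ i)‖ ≤ ‖m i‖ := fun i => by
    rw [eq_neg_of_add_eq_zero_right (h i), norm_neg, norm_mul, RCLike.norm_natCast]
    gcongr
    exact_mod_cast he (σ i)
  have hsum : ∑ i, ‖m i‖ ≤ 0 := by
    have := Finset.sum_le_sum fun i (_ : i ∈ Finset.univ) => hnorm i
    rw [← Finset.mul_sum, Equiv.sum_comp σ fun i => ‖m i‖] at this
    linarith
  funext i
  exact norm_eq_zero.mp <| (Finset.sum_eq_zero_iff_of_nonneg fun i _ => norm_nonneg (m i)).mp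
    (hsum.antisymm (by positivity)) i (Finset.mem_univ i)

section RCLike

variable {𝕜 : Type*} [RCLike 𝕜] [Fintype ι] (σ : Equiv.Perm ι) {e : ι → ℕ}

theorem eq_zero_of_forall_eval_pderiv_loopPolynomial_eq_zero (he : ∀ i, 2 ≤ e i) {c : ι → 𝕜}
    (hc : ∀ i, c i ≠ 0) {x : ι → 𝕜} (hx : ∀ i, eval x (pderiv i (loopPolynomial σ e c)) = 0) :
    x = 0 := by
  have hmonomial : (fun i => c i * x i ^ e i * x (σ i)) = 0 :=
    eq_zero_of_forall_natCast_mul_apply_add_eq_zero σ he fun i => by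
      rw [← mul_eval_pderiv_loopPolynomial σ c x (by grind [he (σ i)]), hx, mul_zero]
  funext j
  by_contra hxj
  have hxσj : x (σ j) ≠ 0 := by
    intro hzero
    have hderiv := hx (σ j)
    simp only [pderiv_loopPolynomial, Equiv.symm_apply_apply, map_add, map_mul, eval_C, eval_X,
      map_pow, hzero, zero_pow (by grind [he (σ j)] : e (σ j) - 1 ≠ 0), mul_zero, zero_mul,
      zero_add] at hderiv
    exact mul_ne_zero (hc j) (pow_ne_zero _ hxj) hderiv
  exact mul_ne_zero (mul_ne_zero (hc j) (pow_ne_zero _ hxj)) hxσj (congrFun hmonomial j)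

theorem exists_ne_zero_forall_eval_pderiv_loopPolynomial_eq_zero_iff (he : ∀ i, 2 ≤ e i)
    (c : ι → 𝕜) :
    (∃ x : ι → 𝕜, x ≠ 0 ∧ ∀ i, eval x (pderiv i (loopPolynomial σ e c)) = 0) ↔ ∃ i, c i = 0 := by
  classical
  constructor
  · rintro ⟨x, hx0, hx⟩
    by_contra! hc
    exact hx0 (eq_zero_of_forall_eval_pderiv_loopPolynomial_eq_zero σ he hc hx)
  · rintro ⟨k, hk⟩
    exact ⟨Pi.single k 1, by simp [Pi.single_eq_zero_iff],
      eval_pderiv_loopPolynomial_single_eq_zero σ he hk⟩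

end RCLike

theorem loopPolynomial_finRotate [CommSemiring R] {n : ℕ} (c : Fin (n + 1) → R) :
    loopPolynomial (finRotate (n + 1)) (fun i => if i = Fin.last n then 3 else 2) c =
      (∑ i : Fin n, C (c i.castSucc) * X i.castSucc ^ 2 * X i.succ)
        + C (c (Fin.last n)) * X (Fin.last n) ^ 3 * X 0 := by
  simp [loopPolynomial, Fin.sum_univ_castSucc, (Fin.castSucc_lt_last _).ne]

theorem loop_family_quasismooth_iff_coeffs_nonzero_general
    (n : ℕ)
    (c : Fin (n + 2) → ℂ)
    (F : MvPolynomial (Fin (n + 2)) ℂ)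
    (hF : F = (∑ i : Fin (n + 1),
        MvPolynomial.C (c i.castSucc) * MvPolynomial.X i.castSucc ^ 2 * MvPolynomial.X i.succ)
      + MvPolynomial.C (c (Fin.last (n + 1))) * MvPolynomial.X (Fin.last (n + 1)) ^ 3 *
        MvPolynomial.X (0 : Fin (n + 2))) :
    (∃ x : Fin (n + 2) → ℂ, x ≠ 0 ∧
        ∀ i, MvPolynomial.eval x (MvPolynomial.pderiv i F) = 0) ↔
      ∃ i, c i = 0 := by
  rw [hF, ← loopPolynomial_finRotate]
  exact exists_ne_zero_forall_eval_pderiv_loopPolynomial_eq_zero_iff _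
    (fun i => by split_ifs <;> norm_num) c

/-- For `n ≥ 1` and complex coefficients `c_0, …, c_{n+1}`, the polynomial
`F = ∑_{i=0}^{n} c_i x_i^2 x_{i+1} + c_{n+1} x_{n+1}^3 x_0` has a common zero of all its
partial derivatives in `ℂ^{n+2} ∖ {0}` if and only if some coefficient `c_i` is zero. -/
theorem loop_family_quasismooth_iff_coeffs_nonzero
    (n : ℕ) (hn : 1 ≤ n)
    (c : Fin (n + 2) → ℂ)
    (F : MvPolynomial (Fin (n + 2)) ℂ)
    (hF : F = (∑ i : Fin (n + 1),
        MvPolynomial.C (c i.castSucc) * MvPolynomial.X i.castSucc ^ 2 * MvPolynomial.X i.succ)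
      + MvPolynomial.C (c (Fin.last (n + 1))) * MvPolynomial.X (Fin.last (n + 1)) ^ 3 *
        MvPolynomial.X (0 : Fin (n + 2))) :
    (∃ x : Fin (n + 2) → ℂ, x ≠ 0 ∧
        ∀ i, MvPolynomial.eval x (MvPolynomial.pderiv i F) = 0) ↔
      ∃ i, c i = 0 :=
  loop_family_quasismooth_iff_coeffs_nonzero_general n c F hF
end

section
/- For n = 7, the terminality criterion fails for the loop exponents (2, 2, …, 2, 3): there exist a cyclic permutation (b_0, b_1, …, b_8) of the 9-tuple (2, 2, 2, 2, 2, 2, 2, 2, 3) and a real number x with 0 < x < 1 such that Σ_{j=2}^{8} [β_j x] ≤ 1, where β_j := 1 − b_{j-1} + b_{j-1}b_{j-2} − ⋯ + (−1)^{j-1} b_{j-1}b_{j-2}⋯b_1 and [y] denotes the fractional part y − ⌊y⌋. -/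
/-!
Take the rotation with `b₁ = 3` and `bᵢ = 2` for `2 ≤ i ≤ 8`. The loop numbers satisfy
`β_{j+1} = 1 - b_j β_j`, so `3β_j - 1` gets multiplied by `-2` at each step from `3β₂ - 1 = -7`;
hence `3β_j ≡ 1 [ZMOD 7]` for `2 ≤ j ≤ 9`. At `x = 3/7` every `[β_j x]` is then `1/7`, and the
seven terms add up to exactly `1`.
-/

open Finset

def loopBeta (b : ℕ → ℤ) (j : ℕ) : ℤ :=
  ∑ s ∈ range j, (-1 : ℤ) ^ s * ∏ t ∈ range s, b (j - 1 - t)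

theorem loopBeta_succ (b : ℕ → ℤ) (j : ℕ) :
    loopBeta b (j + 1) = 1 - b j * loopBeta b j := by
  simp only [loopBeta, sum_range_succ', prod_range_succ', Nat.add_sub_cancel, Nat.sub_sub,
    Nat.sub_zero, pow_succ, range_zero, prod_empty, pow_zero, mul_sum, Nat.add_comm 1]
  rw [add_comm]
  congr 1
  simp only [← sum_neg_distrib]
  exact sum_congr rfl fun s _ => by ring

theorem loopBeta_two (b : ℕ → ℤ) : loopBeta b 2 = 1 - b 1 := by
  simp [loopBeta, sum_range_succ, sub_eq_add_neg]

theorem three_mul_loopBeta_of_eq_two {b : ℕ → ℤ} {j : ℕ} (hj : 2 ≤ j)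
    (hb : ∀ i, 2 ≤ i → i < j → b i = 2) :
    3 * loopBeta b j = 1 + (2 - 3 * b 1) * (-2) ^ (j - 2) := by
  induction j, hj using Nat.le_induction with
  | base => rw [loopBeta_two]; ring
  | succ j hj ih =>
    rw [loopBeta_succ, hb j hj (by omega), show j + 1 - 2 = j - 2 + 1 by omega, pow_succ]
    linear_combination (-2) * ih fun i hi hij => hb i hi (by omega)

theorem Int.fract_mul_div_of_mul_modEq {a β n : ℤ} (hn : 1 < n) (h : a * β ≡ 1 [ZMOD n]) :
    Int.fract ((β : ℝ) * (a / n)) = 1 / n := by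
  obtain ⟨m, hm⟩ := Int.modEq_iff_dvd.mp h.symm
  have hn' : (0 : ℝ) < n := by exact_mod_cast zero_lt_one.trans hn
  have hβ : (β : ℝ) * (a / n) = 1 / n + (m : ℤ) := by
    have hm' : (a : ℝ) * β - 1 = n * m := by exact_mod_cast hm
    field_simp
    linear_combination hm'
  rw [hβ, Int.fract_add_intCast, Int.fract_eq_self]
  refine ⟨by positivity, ?_⟩
  rw [div_lt_one hn']
  exact_mod_cast hn

/-- For `n = 7`, the Reid–Tai-type criterion fails for the loop exponents
`(2, …, 2, 3)`: there is a cyclic permutation `(b_0, …, b_8)` of the 9-tuple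
`(2, 2, 2, 2, 2, 2, 2, 2, 3)` and a real `x ∈ (0, 1)` with `∑_{j=2}^{8} [β_j x] ≤ 1`,
where `β_j = ∑_{s=0}^{j-1} (-1)^s b_{j-1} b_{j-2} ⋯ b_{j-s}` and `[y]` is the fractional
part of `y`. -/
theorem reid_tai_criterion_fails_dim_seven :
    ∃ (k : ℕ) (x : ℝ), 0 < x ∧ x < 1 ∧
      ∑ j ∈ Finset.Icc 2 8,
          Int.fract
            (((∑ s ∈ Finset.range j, (-1 : ℤ) ^ s *
                ∏ t ∈ Finset.range s,
                  (if (j - 1 - t + k) % 9 = 8 then (3 : ℤ) else 2)) : ℤ) * x) ≤ 1 := by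
  set b : ℕ → ℤ := fun i => if (i + 7) % 9 = 8 then 3 else 2
  have hb : ∀ i, 2 ≤ i → i < 9 → b i = 2 := by
    intro i hi hi9
    interval_cases i <;> rfl
  have hterm : ∀ j ∈ Icc 2 8, Int.fract ((loopBeta b j : ℝ) * (3 / 7)) = 1 / 7 := by
    intro j hj
    obtain ⟨hj2, hj8⟩ := mem_Icc.mp hj
    have h3 := three_mul_loopBeta_of_eq_two hj2 fun i hi hij => hb i hi (by omega)
    have h7 : 3 * loopBeta b j ≡ 1 [ZMOD 7] :=
      Int.modEq_iff_dvd.mpr ⟨(-2) ^ (j - 2), by rw [h3]; simp [b]⟩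
    simpa using Int.fract_mul_div_of_mul_modEq (by norm_num) h7
  refine ⟨7, 3 / 7, by norm_num, by norm_num, le_of_eq ?_⟩
  calc _ = ∑ _j ∈ Icc 2 8, (1 / 7 : ℝ) := sum_congr rfl hterm
    _ = 1 := by norm_num
end

section
/- Let m ≥ 2 and let B be an m×m integer matrix with det B ≠ 0. Let v := (1, 1, …, 1) ∈ ℤ^m, let q := B^{-1}·v ∈ ℚ^m, and let d be the least positive integer such that d·q has all integer entries. Then the subgroup of ℤ^m generated by the m columns of B together with the vector v equals all of ℤ^m if and only if d = |det B|. -/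
/-!
The columns of `B` span the lattice `L = B ℤ^m`, whose index in `ℤ^m` is `|det B|`. Hence the
columns together with `v` generate `ℤ^m` exactly when the class of `v` generates the finite group
`ℤ^m ⧸ L`, i.e. when its order is `|det B|`. Since `n • v ∈ L` iff `B⁻¹ (n • v) = n • q` is
integral, that order is `d`.
-/

open Matrix

theorem AddCommGroup.span_int_singleton_eq_top_iff {G : Type*} [AddCommGroup G] [Finite G]
    (w : G) : Submodule.span ℤ {w} = ⊤ ↔ addOrderOf w = Nat.card G := by
  rw [← Submodule.toAddSubgroup_inj, Submodule.span_singleton_toAddSubgroup_eq_zmultiples,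
    Submodule.top_toAddSubgroup, ← AddSubgroup.card_eq_iff_eq_top, Nat.card_zmultiples]

namespace Matrix

variable {ι : Type*} [Fintype ι] [DecidableEq ι]

theorem natCard_quotient_range_toLin' (B : Matrix ι ι ℤ) (hB : B.det ≠ 0) :
    Nat.card ((ι → ℤ) ⧸ LinearMap.range B.toLin') = B.det.natAbs := by
  have hinj : Function.Injective B.toLin' := (injective_iff_map_eq_zero _).2 fun x hx =>
    by_contra fun hx0 => hB (exists_mulVec_eq_zero_iff.1 ⟨x, hx0, hx⟩)
  rw [← (LinearMap.range B.toLin').natAbs_det_equiv (LinearEquiv.ofInjective _ hinj),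
    ← LinearMap.det_toLin' B]
  rfl

theorem mem_range_toLin'_iff_inv_mulVec_integral (B : Matrix ι ι ℤ) (hB : B.det ≠ 0) (y : ι → ℤ) :
    y ∈ LinearMap.range B.toLin' ↔
      ∀ j, ∃ z : ℤ, ((B.map (Int.cast : ℤ → ℚ))⁻¹ *ᵥ fun i => (y i : ℚ)) j = z := by
  have hBq : IsUnit (B.map (Int.cast : ℤ → ℚ)).det := by
    have : (B.map (Int.cast : ℤ → ℚ)).det = B.det := ((Int.castRingHom ℚ).map_det B).symm
    rw [this]
    exact isUnit_iff_ne_zero.2 (Int.cast_ne_zero.2 hB)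
  set Bq := B.map (Int.cast : ℤ → ℚ)
  have hcast (z : ι → ℤ) : (fun i => ((B *ᵥ z) i : ℚ)) = Bq *ᵥ fun i => (z i : ℚ) :=
    funext fun i => RingHom.map_mulVec (Int.castRingHom ℚ) B z i
  constructor
  · rintro ⟨z, rfl⟩ j
    refine ⟨z j, ?_⟩
    rw [toLin'_apply, hcast, mulVec_mulVec, nonsing_inv_mul _ hBq, one_mulVec]
  · intro h
    choose z hz using h
    have hz' : (fun i => (z i : ℚ)) = Bq⁻¹ *ᵥ fun i => (y i : ℚ) := funext fun i => (hz i).symm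
    refine ⟨z, funext fun j => ?_⟩
    have := congrFun (hcast z) j
    rw [hz', mulVec_mulVec, mul_nonsing_inv _ hBq, one_mulVec] at this
    exact_mod_cast this

end Matrix

theorem delsarte_columns_generate_iff_degree_eq_det_general
    (m : ℕ)
    (B : Matrix (Fin m) (Fin m) ℤ) (hB : B.det ≠ 0)
    (v : Fin m → ℤ) (hv : v = fun _ => 1)
    (q : Fin m → ℚ)
    (hq : q = ((B.map (Int.cast : ℤ → ℚ))⁻¹).mulVec (fun j => (v j : ℚ)))
    (d : ℕ) (hd0 : 0 < d)
    (hdint : ∀ j, ∃ z : ℤ, (d : ℚ) * q j = (z : ℚ))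
    (hdmin : ∀ d' : ℕ, 0 < d' → (∀ j, ∃ z : ℤ, (d' : ℚ) * q j = (z : ℚ)) → d ≤ d') :
    Submodule.span ℤ ((Set.range fun j => B.transpose j) ∪ {v}) = ⊤ ↔
      (d : ℤ) = |B.det| := by
  set N := LinearMap.range B.toLin'
  have hcols : Submodule.span ℤ (Set.range fun j => Bᵀ j) = N := (range_toLin' B).symm
  have hsmul (n : ℕ) : n • N.mkQ v = 0 ↔ ∀ j, ∃ z : ℤ, (n : ℚ) * q j = z := by
    rw [← map_nsmul, Submodule.mkQ_apply, Submodule.Quotient.mk_eq_zero,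
      mem_range_toLin'_iff_inv_mulVec_integral B hB, hq, hv]
    have hconst : (fun _ => (n : ℚ)) = (n : ℚ) • fun _ : Fin m => (1 : ℚ) := by ext; simp
    simp [hconst, mulVec_smul]
  have horder : addOrderOf (N.mkQ v) = d :=
    (addOrderOf_eq_iff hd0).2 ⟨(hsmul d).2 hdint,
      fun n hn hn0 h => (hdmin n hn0 ((hsmul n).1 h)).not_gt hn⟩
  have hcard := natCard_quotient_range_toLin' B hB
  have : Finite ((Fin m → ℤ) ⧸ N) :=
    Nat.finite_of_card_ne_zero (hcard ▸ Int.natAbs_ne_zero.2 hB)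
  rw [Submodule.span_union, hcols, ← Submodule.map_mkQ_eq_top, Submodule.map_span,
    Set.image_singleton, AddCommGroup.span_int_singleton_eq_top_iff, horder, hcard,
    Int.abs_eq_natAbs]
  exact_mod_cast Iff.rfl

/-- Let `m ≥ 2` and `B` an `m × m` integer matrix with `det B ≠ 0`.
Let `v = (1, …, 1) ∈ ℤ^m`, `q = B⁻¹ · v ∈ ℚ^m`, and `d` the least positive integer such
that `d·q` has all integer entries. Then the subgroup of `ℤ^m` generated by the columns of
`B` together with `v` is all of `ℤ^m` if and only if `d = |det B|`. -/
theorem delsarte_columns_generate_iff_degree_eq_det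
    (m : ℕ) (hm : 2 ≤ m)
    (B : Matrix (Fin m) (Fin m) ℤ) (hB : B.det ≠ 0)
    (v : Fin m → ℤ) (hv : v = fun _ => 1)
    (q : Fin m → ℚ)
    (hq : q = ((B.map (Int.cast : ℤ → ℚ))⁻¹).mulVec (fun j => (v j : ℚ)))
    (d : ℕ) (hd0 : 0 < d)
    (hdint : ∀ j, ∃ z : ℤ, (d : ℚ) * q j = (z : ℚ))
    (hdmin : ∀ d' : ℕ, 0 < d' → (∀ j, ∃ z : ℤ, (d' : ℚ) * q j = (z : ℚ)) → d ≤ d') :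
    Submodule.span ℤ ((Set.range fun j => B.transpose j) ∪ {v}) = ⊤ ↔
      (d : ℤ) = |B.det| :=
  delsarte_columns_generate_iff_degree_eq_det_general m B hB v hv q hq d hd0 hdint hdmin
end
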